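/- For every x ∈ ℂ and n ≥ 0, the decomposition H_n(x) = (e^{x²}/2) w^{(n)}(−x) + (e^{x²}/2) (−1)^n w^{(n)}(x) holds. -/

import Mathlib

open Complex

/-- The complementary error function, extended to `ℂ`:
`erfc z = (2/√π) ∫_0^∞ e^{-(z+t)²} dt`. -/
noncomputable def cerfc (z : ℂ) : ℂ :=
  (2 / (Real.sqrt Real.pi : ℂ)) * ∫ t in Set.Ioi (0 : ℝ), Complex.exp (-(z + (t : ℂ)) ^ 2)

/-- The Faddeeva (error) function `w(z) = e^{-z²} erfc(-iz)`. -/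
noncomputable def faddeeva (z : ℂ) : ℂ := Complex.exp (-z ^ 2) * cerfc (-I * z)

/-!
Since `erfc u + erfc (-u) = 2` (the two halves of `∫_ℝ e^{-(u+t)²} dt = √π`), the Faddeeva
function satisfies `w z + w (-z) = 2 e^{-z²}`. Differentiating `n` times gives
`w⁽ⁿ⁾(x) + (-1)ⁿ w⁽ⁿ⁾(-x) = 2 (d/dx)ⁿ e^{-x²}`, and Rodrigues' formula
`(d/dx)ⁿ e^{-x²} = (-1)ⁿ Hₙ(x) e^{-x²}` holds because differentiating
`(e^{-x²})' = -2x e^{-x²}` repeatedly shows that `(-1)ⁿ e^{x²} (d/dx)ⁿ e^{-x²}` obeys the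
Hermite three-term recurrence.

Differentiating the sum termwise needs `w` to be entire; this follows from
`erfc z = (2/√π) e^{-z²} ∫_0^∞ e^{-t²-2zt} dt`, differentiated under the integral sign.
-/

open MeasureTheory Set

lemma integrable_cexp_neg_add_sq (z : ℂ) : Integrable fun t : ℝ => cexp (-(z + t) ^ 2) := by
  convert integrable_cexp_quadratic (b := 1) one_pos (-2 * z) (-z ^ 2) using 3 with t
  ring

lemma integral_cexp_neg_add_sq (z : ℂ) : ∫ t : ℝ, cexp (-(z + t) ^ 2) = √Real.pi := by
  have h := integral_cexp_quadratic (b := -1) (by simp) (-2 * z) (-z ^ 2)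
  simp_rw [show ∀ t : ℂ, -(z + t) ^ 2 = -1 * t ^ 2 + -2 * z * t + -z ^ 2 from fun t => by ring,
    h]
  rw [show -z ^ 2 - (-2 * z) ^ 2 / (4 * -1) = 0 by ring, exp_zero, mul_one, neg_neg, div_one,
    show (1 / 2 : ℂ) = ((1 / 2 : ℝ) : ℂ) by norm_num, ← ofReal_cpow Real.pi_pos.le,
    Real.sqrt_eq_rpow]

theorem cerfc_add_cerfc_neg (z : ℂ) : cerfc z + cerfc (-z) = 2 := by
  have hneg : ∫ t in Ioi (0 : ℝ), cexp (-(-z + t) ^ 2) =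
      ∫ t in Iic (0 : ℝ), cexp (-(z + t) ^ 2) := by
    convert integral_comp_neg_Ioi 0 fun t : ℝ => cexp (-(z + t) ^ 2) using 3 with t
    · push_cast; ring_nf
    · simp
  have hsplit := intervalIntegral.integral_Iic_add_Ioi (b := 0)
    (integrable_cexp_neg_add_sq z).integrableOn (integrable_cexp_neg_add_sq z).integrableOn
  have hπ : (√Real.pi : ℂ) ≠ 0 := ofReal_ne_zero.mpr (Real.sqrt_pos.mpr Real.pi_pos).ne'
  rw [cerfc, cerfc, ← mul_add, hneg, add_comm, hsplit, integral_cexp_neg_add_sq]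
  field_simp

theorem faddeeva_add_faddeeva_neg (z : ℂ) : faddeeva z + faddeeva (-z) = 2 * cexp (-z ^ 2) := by
  rw [faddeeva, faddeeva, neg_sq, show -I * -z = -(-I * z) by ring, ← mul_add,
    cerfc_add_cerfc_neg, mul_comm]

lemma integrable_exp_neg_sq_add_mul (c : ℝ) :
    Integrable fun t : ℝ => Real.exp (-t ^ 2 + c * t) := by
  convert (integrable_cexp_quadratic (b := 1) one_pos c 0).norm using 2 with t
  rw [norm_exp]
  simp [← ofReal_pow]

lemma integrable_cexp_neg_sq_sub_mul (z : ℂ) :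
    Integrable fun t : ℝ => cexp (-(t : ℂ) ^ 2 - 2 * z * t) := by
  convert integrable_cexp_quadratic (b := 1) one_pos (-2 * z) 0 using 3 with t
  ring

lemma norm_cexp_neg_sq_sub_mul_le {z : ℂ} {M t : ℝ} (hz : ‖z‖ ≤ M) (ht : 0 ≤ t) :
    ‖cexp (-(t : ℂ) ^ 2 - 2 * z * t)‖ ≤ Real.exp (-t ^ 2 + 2 * M * t) := by
  rw [norm_exp, Real.exp_le_exp]
  have hre : -z.re ≤ M := (neg_le_abs z.re).trans ((abs_re_le_norm z).trans hz)
  simp only [sub_re, neg_re, mul_re, ← ofReal_pow, ofReal_re, ofReal_im, re_ofNat, im_ofNat,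
    zero_mul, mul_zero, sub_zero]
  nlinarith

lemma norm_cexp_neg_sq_sub_mul_mul_le {z : ℂ} {M t : ℝ} (hz : ‖z‖ ≤ M) (ht : 0 ≤ t) :
    ‖cexp (-(t : ℂ) ^ 2 - 2 * z * t) * (-2 * t)‖ ≤ 2 * Real.exp (-t ^ 2 + (2 * M + 1) * t) :=
  calc ‖cexp (-(t : ℂ) ^ 2 - 2 * z * t) * (-2 * t)‖
      ≤ Real.exp (-t ^ 2 + 2 * M * t) * (2 * Real.exp t) := by
        rw [norm_mul]
        gcongr
        · exact norm_cexp_neg_sq_sub_mul_le hz ht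
        · simp only [neg_mul, norm_neg, Complex.norm_mul, norm_ofNat, norm_real, Real.norm_eq_abs,
            abs_of_nonneg ht]
          linarith [Real.add_one_le_exp t]
    _ = 2 * Real.exp (-t ^ 2 + (2 * M + 1) * t) := by
        rw [mul_left_comm, ← Real.exp_add]
        ring_nf

theorem differentiable_integral_Ioi_cexp_neg_sq_sub_mul :
    Differentiable ℂ fun z : ℂ => ∫ t in Ioi (0 : ℝ), cexp (-(t : ℂ) ^ 2 - 2 * z * t) := by
  intro z₀
  have hderiv (t : ℝ) (z : ℂ) : HasDerivAt (fun z : ℂ => cexp (-(t : ℂ) ^ 2 - 2 * z * t))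
      (cexp (-(t : ℂ) ^ 2 - 2 * z * t) * (-2 * t)) z := by
    simpa using
      ((((hasDerivAt_id' z).const_mul 2).mul_const (t : ℂ)).const_sub (-(t : ℂ) ^ 2)).cexp
  refine (hasDerivAt_integral_of_dominated_loc_of_deriv_le (Metric.closedBall_mem_nhds z₀ one_pos)
    (.of_forall fun z => (integrable_cexp_neg_sq_sub_mul z).aestronglyMeasurable.restrict)
    (integrable_cexp_neg_sq_sub_mul z₀).restrict
    (by fun_prop : Continuous _).aestronglyMeasurable.restrict ?_
    ((integrable_exp_neg_sq_add_mul (2 * (‖z₀‖ + 1) + 1)).restrict.const_mul 2)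
    (.of_forall fun t z _ => hderiv t z)).2.differentiableAt
  refine (ae_restrict_iff' measurableSet_Ioi).mpr (.of_forall fun t ht z hz => ?_)
  refine norm_cexp_neg_sq_sub_mul_mul_le ?_ ht.le
  rw [Metric.mem_closedBall, dist_eq_norm] at hz
  linarith [norm_le_norm_add_norm_sub' z z₀]

lemma cerfc_eq_mul_integral_Ioi (z : ℂ) :
    cerfc z = 2 / √Real.pi * cexp (-z ^ 2) *
      ∫ t in Ioi (0 : ℝ), cexp (-(t : ℂ) ^ 2 - 2 * z * t) := by
  rw [cerfc, mul_assoc, ← integral_const_mul (cexp (-z ^ 2))]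
  congr 2 with t
  rw [← Complex.exp_add]
  ring_nf

theorem differentiable_cerfc : Differentiable ℂ cerfc := by
  rw [funext cerfc_eq_mul_integral_Ioi]
  have := differentiable_integral_Ioi_cexp_neg_sq_sub_mul
  fun_prop

theorem differentiable_faddeeva : Differentiable ℂ faddeeva := by
  have := differentiable_cerfc
  unfold faddeeva
  fun_prop

lemma iteratedDeriv_succ_cexp_neg_sq (n : ℕ) (z : ℂ) :
    iteratedDeriv (n + 1) (fun z => cexp (-z ^ 2)) z =
      -2 * z * iteratedDeriv n (fun z => cexp (-z ^ 2)) z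
        - 2 * n * iteratedDeriv (n - 1) (fun z => cexp (-z ^ 2)) z := by
  set g : ℂ → ℂ := fun z => cexp (-z ^ 2)
  have hg : ContDiff ℂ ⊤ g := by fun_prop
  have hderiv (k : ℕ) (z : ℂ) : HasDerivAt (iteratedDeriv k g) (iteratedDeriv (k + 1) g z) z := by
    rw [iteratedDeriv_succ]
    exact ((hg.differentiable_iteratedDeriv k (by simp)) z).hasDerivAt
  induction n generalizing z with
  | zero => simp [g, mul_comm]
  | succ n ih =>
    have h := ((((hasDerivAt_id' z).const_mul (-2)).fun_mul (hderiv n z)).fun_sub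
      ((hderiv (n - 1) z).const_mul (2 * n : ℂ))).congr_of_eventuallyEq (.of_forall ih)
    rw [(hderiv (n + 1) z).unique h]
    -- truncated subtraction: `n - 1 + 1 = n` fails for `n = 0`
    rcases n with _ | n
    · simp only [iteratedDeriv_zero, CharP.cast_eq_zero, zero_tsub, tsub_self, mul_zero, zero_mul,
        sub_zero]
      ring
    · simp only [Nat.add_sub_cancel]
      push_cast
      ring

theorem iteratedDeriv_cexp_neg_sq (H : ℕ → ℂ → ℂ) (hH0 : ∀ x, H 0 x = 1)
    (hH1 : ∀ x, H 1 x = 2 * x)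
    (hHrec : ∀ n : ℕ, 1 ≤ n → ∀ x, H (n + 1) x = 2 * x * H n x - 2 * (n : ℂ) * H (n - 1) x)
    (n : ℕ) (x : ℂ) :
    iteratedDeriv n (fun z => cexp (-z ^ 2)) x = (-1) ^ n * H n x * cexp (-x ^ 2) := by
  induction n using Nat.twoStepInduction with
  | zero => simp [hH0]
  | one => simp [iteratedDeriv_succ_cexp_neg_sq 0, hH1]
  | more n ih₀ ih₁ =>
    rw [iteratedDeriv_succ_cexp_neg_sq, ih₁, Nat.add_sub_cancel, ih₀, hHrec (n + 1) (by omega),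
      Nat.add_sub_cancel]
    push_cast
    ring

lemma iteratedDeriv_faddeeva_add_neg_one_pow_mul (n : ℕ) (x : ℂ) :
    iteratedDeriv n faddeeva x + (-1) ^ n * iteratedDeriv n faddeeva (-x) =
      2 * iteratedDeriv n (fun z => cexp (-z ^ 2)) x := by
  have hw : ContDiff ℂ n faddeeva := differentiable_faddeeva.contDiff
  calc iteratedDeriv n faddeeva x + (-1) ^ n * iteratedDeriv n faddeeva (-x)
      = iteratedDeriv n (fun z => faddeeva z + faddeeva (-z)) x := by
        rw [iteratedDeriv_fun_add (g := fun z => faddeeva (-z)) hw.contDiffAt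
          (hw.comp contDiff_neg).contDiffAt, iteratedDeriv_comp_neg, smul_eq_mul]
    _ = 2 * iteratedDeriv n (fun z => cexp (-z ^ 2)) x := by
        simp_rw [faddeeva_add_faddeeva_neg, iteratedDeriv_const_mul_field]

/-- Decomposition of the Hermite polynomials in terms of derivatives of the error
function: `H_n(x) = (e^{x²}/2) w⁽ⁿ⁾(-x) + (e^{x²}/2) (-1)ⁿ w⁽ⁿ⁾(x)`. -/
theorem hermite_eq_faddeeva_decomposition (H : ℕ → ℂ → ℂ)
    (hH0 : ∀ x, H 0 x = 1) (hH1 : ∀ x, H 1 x = 2 * x)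
    (hHrec : ∀ n : ℕ, 1 ≤ n → ∀ x, H (n + 1) x = 2 * x * H n x - 2 * (n : ℂ) * H (n - 1) x)
    (x : ℂ) (n : ℕ) :
    H n x = Complex.exp (x ^ 2) / 2 * iteratedDeriv n faddeeva (-x)
      + Complex.exp (x ^ 2) / 2 * (-1) ^ n * iteratedDeriv n faddeeva x := by
  have hw := iteratedDeriv_faddeeva_add_neg_one_pow_mul n x
  rw [iteratedDeriv_cexp_neg_sq H hH0 hH1 hHrec] at hw
  have hexp : cexp (x ^ 2) * cexp (-x ^ 2) = 1 := by rw [← Complex.exp_add]; simp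
  have hsign : ((-1 : ℂ) ^ n) ^ 2 = 1 := by rw [← pow_mul, mul_comm, pow_mul]; simp
  linear_combination (-(cexp (x ^ 2) * (-1) ^ n / 2)) * hw + (-H n x) * hexp
    + (cexp (x ^ 2) * iteratedDeriv n faddeeva (-x) / 2 - H n x * cexp (x ^ 2) * cexp (-x ^ 2))
      * hsign
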